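/- arXiv:1401.1480 — 3 statements merged into one kernel-verified Lean document; each statement's English description precedes it below -/
import Mathlib

section
/- For all real s, ∫_s^∞ Q(√γ) dγ = (√s · e^{-s/2})/√(2π) + (1-s)·Q(√s), where Q is the standard Gaussian tail function. -/
open MeasureTheory Real

/-- The standard Gaussian tail function `Q(t) = ∫_t^∞ (1/√(2π)) e^{-u²/2} du`. -/
noncomputable def gaussQ (t : ℝ) : ℝ :=
  ∫ u in Set.Ioi t, (1 / Real.sqrt (2 * π)) * Real.exp (-u ^ 2 / 2)

/-!
The closed form `F(s) = √s e^{-s/2} / √(2π) + (1 - s) Q(√s)` satisfies `F' = -Q(√·)` on all of `ℝ`: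
for `s < 0` it is affine since `√s = 0`, for `s > 0` the chain rule gives two `1/√s` terms that
cancel, and at `0` differentiability follows from continuity of the derivative. Mills' ratio
`Q(t) ≤ φ(t)/t` squeezes `F(s)` between `0` and `√s e^{-s/2} / √(2π)` for `s ≥ 1`, so `F → 0`.
As the integrand `Q(√γ)` is nonnegative, the improper fundamental theorem of calculus then gives
`∫_s^∞ Q(√γ) dγ = F(s)` without a separate integrability argument.
-/

open Filter Set Topology ProbabilityTheory

theorem hasDerivAt_integral_Ioi {E : Type*} [NormedAddCommGroup E] [NormedSpace ℝ E]
    [CompleteSpace E] {f : ℝ → E} (hf : Integrable f) {t : ℝ} (hft : ContinuousAt f t) :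
    HasDerivAt (fun x ↦ ∫ u in Ioi x, f u) (-f t) t := by
  have hsub : (fun x ↦ ∫ u in Ioi x, f u) = fun x ↦ (∫ u in Ioi 0, f u) - ∫ u in 0..x, f u := by
    ext x
    rw [← intervalIntegral.integral_Ioi_sub_Ioi' hf.integrableOn hf.integrableOn, sub_sub_cancel]
  rw [hsub]
  simpa using (intervalIntegral.integral_hasDerivAt_right hf.intervalIntegrable
    (hf.aestronglyMeasurable.stronglyMeasurableAtFilter) hft).const_sub _

theorem gaussianPDFReal_zero_one (x : ℝ) :
    gaussianPDFReal 0 1 x = (√(2 * π))⁻¹ * exp (-x ^ 2 / 2) := by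
  simp [gaussianPDFReal]

theorem hasDerivAt_gaussianPDFReal_zero_one (x : ℝ) :
    HasDerivAt (gaussianPDFReal 0 1) (-x * gaussianPDFReal 0 1 x) x := by
  simp only [funext gaussianPDFReal_zero_one]
  have h : HasDerivAt (fun x : ℝ ↦ -x ^ 2 / 2) (-x) x :=
    ((hasDerivAt_pow 2 x).fun_neg.div_const 2).congr_deriv (by norm_num; ring)
  exact (h.exp.const_mul _).congr_deriv (by ring)

theorem tendsto_gaussianPDFReal_zero_one_atTop :
    Tendsto (gaussianPDFReal 0 1) atTop (𝓝 0) := by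
  have h : Tendsto (fun u : ℝ ↦ u ^ 2 / 2) atTop atTop :=
    (tendsto_pow_atTop two_ne_zero).atTop_div_const two_pos
  simpa [funext gaussianPDFReal_zero_one, neg_div] using
    (tendsto_exp_neg_atTop_nhds_zero.comp h).const_mul (√(2 * π))⁻¹

theorem gaussQ_eq_integral_gaussianPDFReal (t : ℝ) :
    gaussQ t = ∫ u in Ioi t, gaussianPDFReal 0 1 u := by
  simp only [gaussQ, gaussianPDFReal_zero_one, one_div]

theorem gaussQ_nonneg (t : ℝ) : 0 ≤ gaussQ t := by
  rw [gaussQ_eq_integral_gaussianPDFReal]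
  exact setIntegral_nonneg measurableSet_Ioi fun u _ ↦ gaussianPDFReal_nonneg 0 1 u

theorem hasDerivAt_gaussQ (t : ℝ) : HasDerivAt gaussQ (-gaussianPDFReal 0 1 t) t := by
  simp only [funext gaussQ_eq_integral_gaussianPDFReal]
  exact hasDerivAt_integral_Ioi (integrable_gaussianPDFReal 0 1)
    (hasDerivAt_gaussianPDFReal_zero_one t).continuousAt

theorem continuous_gaussQ : Continuous gaussQ :=
  continuous_iff_continuousAt.2 fun t ↦ (hasDerivAt_gaussQ t).continuousAt

theorem gaussQ_le_gaussianPDFReal_div {t : ℝ} (ht : 0 < t) :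
    gaussQ t ≤ gaussianPDFReal 0 1 t / t := by
  have hderiv : ∀ u ∈ Ici t, HasDerivAt (fun u ↦ -gaussianPDFReal 0 1 u)
      (u * gaussianPDFReal 0 1 u) u := fun u _ ↦ by
    simpa using (hasDerivAt_gaussianPDFReal_zero_one u).fun_neg
  have hnonneg : ∀ u ∈ Ioi t, 0 ≤ u * gaussianPDFReal 0 1 u := fun u hu ↦
    mul_nonneg (ht.trans hu).le (gaussianPDFReal_nonneg 0 1 u)
  have hlim : Tendsto (fun u ↦ -gaussianPDFReal 0 1 u) atTop (𝓝 (-0)) :=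
    tendsto_gaussianPDFReal_zero_one_atTop.neg
  have hmoment : ∫ u in Ioi t, u * gaussianPDFReal 0 1 u = gaussianPDFReal 0 1 t := by
    rw [integral_Ioi_of_hasDerivAt_of_nonneg' hderiv hnonneg hlim]; ring
  calc gaussQ t = ∫ u in Ioi t, gaussianPDFReal 0 1 u := gaussQ_eq_integral_gaussianPDFReal t
    _ ≤ ∫ u in Ioi t, t⁻¹ * (u * gaussianPDFReal 0 1 u) := by
        refine setIntegral_mono_on (integrable_gaussianPDFReal 0 1).integrableOn
          ((integrableOn_Ioi_deriv_of_nonneg' hderiv hnonneg hlim).const_mul _)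
          measurableSet_Ioi fun u hu ↦ ?_
        rw [← mul_assoc]
        exact le_mul_of_one_le_left (gaussianPDFReal_nonneg 0 1 u)
          ((one_le_inv_mul₀ ht).2 (le_of_lt hu))
    _ = gaussianPDFReal 0 1 t / t := by rw [integral_const_mul, hmoment, inv_mul_eq_div]

noncomputable def gaussQSqrtTail (s : ℝ) : ℝ :=
  √s * exp (-s / 2) / √(2 * π) + (1 - s) * gaussQ √s

theorem continuous_gaussQSqrtTail : Continuous gaussQSqrtTail := by
  have := continuous_gaussQ
  unfold gaussQSqrtTail
  fun_prop

theorem hasDerivAt_gaussQSqrtTail_of_ne_zero {x : ℝ} (hx : x ≠ 0) :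
    HasDerivAt gaussQSqrtTail (-gaussQ √x) x := by
  have hsqrt := hasDerivAt_sqrt hx
  have hexp : HasDerivAt (fun x : ℝ ↦ exp (-x / 2)) (exp (-x / 2) * (-1 / 2)) x :=
    ((hasDerivAt_id x).neg.div_const 2).exp
  have hQ := (hasDerivAt_gaussQ √x).comp x hsqrt
  have h := ((hsqrt.mul hexp).div_const √(2 * π)).add (((hasDerivAt_id x).const_sub 1).mul hQ)
  refine h.congr_deriv ?_
  simp only [Function.comp_apply, id, gaussianPDFReal_zero_one]
  rcases hx.lt_or_gt with hneg | hpos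
  -- for `x < 0`, both `√x` and the junk value `1 / (2 * √x)` of its derivative are `0`
  · simp [sqrt_eq_zero'.2 hneg.le]
  · field_simp
    rw [sq_sqrt hpos.le]
    ring

theorem hasDerivAt_gaussQSqrtTail (x : ℝ) : HasDerivAt gaussQSqrtTail (-gaussQ √x) x :=
  hasDerivAt_of_hasDerivAt_of_ne' (fun _ hy ↦ hasDerivAt_gaussQSqrtTail_of_ne_zero hy)
    continuous_gaussQSqrtTail.continuousAt
    (continuous_gaussQ.comp continuous_sqrt).neg.continuousAt x

theorem gaussQSqrtTail_mem_Icc {s : ℝ} (hs : 1 ≤ s) :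
    gaussQSqrtTail s ∈ Icc 0 (√s * exp (-s / 2) / √(2 * π)) := by
  have hpos : 0 < s := one_pos.trans_le hs
  have hmills := gaussQ_le_gaussianPDFReal_div (sqrt_pos.2 hpos)
  rw [gaussianPDFReal_zero_one, sq_sqrt hpos.le] at hmills
  have hQ := gaussQ_nonneg √s
  have hsQ : s * gaussQ √s ≤ √s * exp (-s / 2) / √(2 * π) :=
    calc s * gaussQ √s ≤ s * ((√(2 * π))⁻¹ * exp (-s / 2) / √s) :=
          mul_le_mul_of_nonneg_left hmills hpos.le
      _ = √s * exp (-s / 2) / √(2 * π) := by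
          rw [← div_sqrt (x := s)]
          field_simp
          exact sq_sqrt hpos.le
  rw [gaussQSqrtTail]
  exact ⟨by linarith, add_le_of_nonpos_right (mul_nonpos_of_nonpos_of_nonneg (by linarith) hQ)⟩

theorem tendsto_gaussQSqrtTail_atTop : Tendsto gaussQSqrtTail atTop (𝓝 0) := by
  have h := (tendsto_rpow_mul_exp_neg_mul_atTop_nhds_zero (1 / 2) (1 / 2) one_half_pos).div_const
    √(2 * π)
  rw [zero_div] at h
  refine tendsto_of_tendsto_of_tendsto_of_le_of_le' tendsto_const_nhds (h.congr fun s ↦ ?_)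
    (eventually_atTop.2 ⟨1, fun s hs ↦ (gaussQSqrtTail_mem_Icc hs).1⟩)
    (eventually_atTop.2 ⟨1, fun s hs ↦ (gaussQSqrtTail_mem_Icc hs).2⟩)
  rw [← sqrt_eq_rpow]
  ring_nf

theorem integral_gaussQ_sqrt (s : ℝ) :
    ∫ γ in Set.Ioi s, gaussQ (Real.sqrt γ) =
      Real.sqrt s * Real.exp (-s / 2) / Real.sqrt (2 * π) + (1 - s) * gaussQ (Real.sqrt s) := by
  have h := integral_Ioi_of_hasDerivAt_of_nonneg' (a := s) (g := fun x ↦ -gaussQSqrtTail x)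
    (g' := fun x ↦ gaussQ √x) (fun x _ ↦ by simpa using (hasDerivAt_gaussQSqrtTail x).fun_neg)
    (fun x _ ↦ gaussQ_nonneg _) (by simpa using tendsto_gaussQSqrtTail_atTop.neg)
  simpa [gaussQSqrtTail] using h
end

section
/- Let b be uniformly distributed on {-1, 1} and n a standard Gaussian independent of b. Then the MMSE of estimating b from √γ·b + n satisfies mmse_b(γ) = (1/√(2π)) ∫_{-∞}^{∞} (1 - tanh(√γ·y)) e^{-(y-√γ)²/2} dy, and this is at least 2Q(√γ) for all γ ≥ 0. -/
/-!
Write `a = √γ` and `φ_m` for the density of `N(m, 1)`. The identity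
`(1 - tanh (a y)) φ_a(y) = (1 + tanh (a y)) φ_{-a}(y)`, i.e. `φ_a / φ_{-a} = e^{2ay}`, drives
everything. It shows that `b - tanh (a Y)` is orthogonal to every bounded function of
`Y = a b + n`, so `E[b | Y] = tanh (a Y)`; it turns the two halves of `E[(b - tanh (a Y))²]` into
`E[1 - tanh (a y)]` under `N(a, 1)`; and it makes `y ↦ (1 - tanh (a y)) φ_a(y)` even. Hence that
integral is twice the integral over `y > 0`, where the integrand dominates `φ_{-a}`, whose mass
on `y > 0` is `Q(a)`.
-/

open MeasureTheory ProbabilityTheory Real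

/-- The minimum mean-square error of estimating `Z` from `√γ·Z + N`:
`mmse_Z(γ) = E[(Z − E[Z | √γ·Z + N])²]`. -/
noncomputable def mmse {Ω : Type*} [MeasureSpace Ω] (Z N : Ω → ℝ) (γ : ℝ) : ℝ :=
  ∫ ω, (Z ω - (volume[Z | MeasurableSpace.comap
      (fun ω' => Real.sqrt γ * Z ω' + N ω') Real.measurableSpace]) ω) ^ 2

open scoped ENNReal NNReal
open Set

namespace Real

@[fun_prop]
lemma continuous_tanh : Continuous tanh := by
  rw [show tanh = fun x => sinh x / cosh x from funext tanh_eq_sinh_div_cosh]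
  exact continuous_sinh.div continuous_cosh fun x => (cosh_pos x).ne'

lemma tanh_nonneg {x : ℝ} (hx : 0 ≤ x) : 0 ≤ tanh x := by
  rw [tanh_eq_sinh_div_cosh]
  exact div_nonneg (sinh_nonneg_iff.2 hx) (cosh_pos x).le

lemma one_sub_tanh_mul_exp (x : ℝ) : (1 - tanh x) * exp x = (1 + tanh x) * exp (-x) := by
  have := (cosh_pos x).ne'
  rw [tanh_eq_sinh_div_cosh, ← cosh_add_sinh, ← cosh_sub_sinh]
  field_simp

end Real

lemma integrable_comp_tanh {ν : Measure ℝ} [IsFiniteMeasure ν] {g : ℝ → ℝ}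
    (hg : Continuous g) (a : ℝ) : Integrable (fun y => g (tanh (a * y))) ν := by
  obtain ⟨C, hC⟩ := isCompact_Icc.exists_bound_of_continuousOn (s := Icc (-1 : ℝ) 1)
    hg.continuousOn
  refine .of_bound (by fun_prop) C (ae_of_all _ fun y => hC _ ?_)
  exact ⟨(neg_one_lt_tanh _).le, (tanh_lt_one _).le⟩

lemma gaussianPDFReal_mul_one_sub_tanh (a y : ℝ) :
    gaussianPDFReal a 1 y * (1 - tanh (a * y))
      = gaussianPDFReal (-a) 1 y * (1 + tanh (a * y)) := by
  have hpos : -(y - a) ^ 2 / (2 * 1) = -(y ^ 2 + a ^ 2) / 2 + a * y := by ring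
  have hneg : -(y - -a) ^ 2 / (2 * 1) = -(y ^ 2 + a ^ 2) / 2 + -(a * y) := by ring
  simp only [gaussianPDFReal, NNReal.coe_one, hpos, hneg, exp_add]
  linear_combination
    (√(2 * π * 1))⁻¹ * rexp (-(y ^ 2 + a ^ 2) / 2) * one_sub_tanh_mul_exp (a * y)

lemma integral_mul_one_sub_tanh_gaussianReal (g : ℝ → ℝ) (a : ℝ) :
    ∫ y, g y * (1 - tanh (a * y)) ∂gaussianReal a 1
      = ∫ y, g y * (1 + tanh (a * y)) ∂gaussianReal (-a) 1 := by
  simp only [integral_gaussianReal_eq_integral_smul one_ne_zero, smul_eq_mul]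
  congr 1 with y
  linear_combination g y * gaussianPDFReal_mul_one_sub_tanh a y

lemma gaussianPDFReal_neg (μ : ℝ) (v : ℝ≥0) (x : ℝ) :
    gaussianPDFReal μ v (-x) = gaussianPDFReal (-μ) v x := by
  simp only [gaussianPDFReal]
  ring_nf

lemma gaussQ_eq_setIntegral_gaussianPDFReal (t : ℝ) :
    gaussQ t = ∫ y in Ioi 0, gaussianPDFReal (-t) 1 y := by
  have hshift := (measurePreserving_add_right volume t).setIntegral_preimage_emb
    (measurableEmbedding_addRight t) (gaussianPDFReal 0 1) (Ioi t)
  rw [preimage_add_const_Ioi, sub_self] at hshift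
  simp only [gaussianPDFReal_add, zero_sub] at hshift
  rw [hshift, gaussQ]
  congr 1 with u
  simp [gaussianPDFReal]

lemma two_mul_gaussQ_le_integral_one_sub_tanh {a : ℝ} (ha : 0 ≤ a) :
    2 * gaussQ a ≤ ∫ y, 1 - tanh (a * y) ∂gaussianReal a 1 := by
  simp only [integral_gaussianReal_eq_integral_smul one_ne_zero, smul_eq_mul]
  set f := fun y => gaussianPDFReal a 1 y * (1 - tanh (a * y)) with hf
  have hf_int : Integrable f :=
    (integrable_gaussianPDFReal a 1).mul_bdd (c := 2) (by fun_prop) (ae_of_all _ fun y => by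
      rw [Real.norm_eq_abs, abs_le]
      constructor <;> linarith [neg_one_lt_tanh (a * y), tanh_lt_one (a * y)])
  have hf_even : ∀ y, f (-y) = f y := fun y => by
    simp only [hf]
    rw [mul_neg, tanh_neg, sub_neg_eq_add, gaussianPDFReal_neg,
      gaussianPDFReal_mul_one_sub_tanh]
  have hleft : ∫ y in Iic 0, f y = ∫ y in Ioi 0, f y := by
    have := integral_comp_neg_Ioi 0 f
    simp only [neg_zero, hf_even] at this
    exact this.symm
  have hright : gaussQ a ≤ ∫ y in Ioi 0, f y := by
    rw [gaussQ_eq_setIntegral_gaussianPDFReal]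
    refine setIntegral_mono_on (integrable_gaussianPDFReal _ _).integrableOn hf_int.integrableOn
      measurableSet_Ioi fun y hy => ?_
    simp only [hf, gaussianPDFReal_mul_one_sub_tanh]
    have := tanh_nonneg (mul_nonneg ha (le_of_lt hy))
    nlinarith [gaussianPDFReal_nonneg (-a) 1 y]
  rw [← intervalIntegral.integral_Iic_add_Ioi hf_int.integrableOn hf_int.integrableOn, hleft]
  linarith

noncomputable def rademacher : Measure ℝ :=
  (2 : ℝ≥0∞)⁻¹ • Measure.dirac (-1) + (2 : ℝ≥0∞)⁻¹ • Measure.dirac 1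

lemma integrable_id_rademacher : Integrable id rademacher := by
  refine .add_measure (.smul_measure ?_ (by simp)) (.smul_measure ?_ (by simp)) <;>
    exact integrable_dirac (by simp)

section SignalPlusNoise

variable {Ω : Type*} {mΩ : MeasurableSpace Ω} {μ : Measure Ω} [IsProbabilityMeasure μ]
  {b n : Ω → ℝ}

lemma map_prodMk_rademacher_add_gaussian (hb : Measurable b) (hn : Measurable n)
    (hbLaw : μ.map b = rademacher) (hnLaw : μ.map n = gaussianReal 0 1)
    (hindep : IndepFun b n μ) (a : ℝ) :
    μ.map (fun ω => (b ω, a * b ω + n ω))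
      = (2 : ℝ≥0∞)⁻¹ • (gaussianReal (-a) 1).map (Prod.mk (-1))
        + (2 : ℝ≥0∞)⁻¹ • (gaussianReal a 1).map (Prod.mk 1) := by
  set T : ℝ × ℝ → ℝ × ℝ := fun p => (p.1, a * p.1 + p.2)
  have hT : Measurable T := by fun_prop
  have hjoint : μ.map (fun ω => (b ω, n ω)) = rademacher.prod (gaussianReal 0 1) := by
    rw [← hbLaw, ← hnLaw]
    exact (indepFun_iff_map_prod_eq_prod_map_map hb.aemeasurable hn.aemeasurable).mp hindep
  have hfiber (x : ℝ) : ((Measure.dirac x).prod (gaussianReal 0 1)).map T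
      = (gaussianReal (a * x) 1).map (Prod.mk x) := by
    calc ((Measure.dirac x).prod (gaussianReal 0 1)).map T
        = ((gaussianReal 0 1).map (a * x + ·)).map (Prod.mk x) := by
          rw [Measure.dirac_prod, Measure.map_map hT measurable_prodMk_left,
            Measure.map_map measurable_prodMk_left (by fun_prop)]
          rfl
      _ = (gaussianReal (a * x) 1).map (Prod.mk x) := by rw [gaussianReal_map_const_add, zero_add]
  rw [show (fun ω => (b ω, a * b ω + n ω)) = T ∘ fun ω => (b ω, n ω) from rfl,
    ← Measure.map_map hT (hb.prodMk hn), hjoint, rademacher, Measure.add_prod,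
    Measure.prod_smul_left, Measure.prod_smul_left, Measure.map_add _ _ hT, Measure.map_smul,
    Measure.map_smul, hfiber, hfiber, mul_neg_one, mul_one]

theorem integral_rademacher_add_gaussian (hb : Measurable b) (hn : Measurable n)
    (hbLaw : μ.map b = rademacher) (hnLaw : μ.map n = gaussianReal 0 1)
    (hindep : IndepFun b n μ) (a : ℝ) {F : ℝ → ℝ → ℝ}
    (hF : Measurable (Function.uncurry F)) (hF_neg : Integrable (F (-1)) (gaussianReal (-a) 1))
    (hF_pos : Integrable (F 1) (gaussianReal a 1)) :
    ∫ ω, F (b ω) (a * b ω + n ω) ∂μ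
      = 2⁻¹ * ∫ y, F (-1) y ∂gaussianReal (-a) 1
        + 2⁻¹ * ∫ y, F 1 y ∂gaussianReal a 1 := by
  have hfiber_int {x : ℝ} {ν : Measure ℝ} (hx : Integrable (F x) ν) :
      Integrable (Function.uncurry F) ((2 : ℝ≥0∞)⁻¹ • ν.map (Prod.mk x)) :=
    ((integrable_map_measure hF.aestronglyMeasurable measurable_prodMk_left.aemeasurable).2
      hx).smul_measure (by simp)
  have hfiber_eq (x : ℝ) (ν : Measure ℝ) :
      ∫ p, Function.uncurry F p ∂(ν.map (Prod.mk x)) = ∫ y, F x y ∂ν :=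
    integral_map measurable_prodMk_left.aemeasurable hF.aestronglyMeasurable
  calc ∫ ω, F (b ω) (a * b ω + n ω) ∂μ
      = ∫ p, Function.uncurry F p ∂(μ.map fun ω => (b ω, a * b ω + n ω)) :=
        (integral_map (hb.prodMk ((measurable_const.mul hb).add hn)).aemeasurable
          hF.aestronglyMeasurable).symm
    _ = _ := by
        rw [map_prodMk_rademacher_add_gaussian hb hn hbLaw hnLaw hindep,
          integral_add_measure (hfiber_int hF_neg) (hfiber_int hF_pos), integral_smul_measure,
          integral_smul_measure, hfiber_eq, hfiber_eq]
        simp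

theorem integral_mul_sub_tanh_rademacher_add_gaussian (hb : Measurable b) (hn : Measurable n)
    (hbLaw : μ.map b = rademacher) (hnLaw : μ.map n = gaussianReal 0 1)
    (hindep : IndepFun b n μ) (a : ℝ) {h : ℝ → ℝ} (hh : Measurable h) {C : ℝ}
    (hC : ∀ y, |h y| ≤ C) :
    ∫ ω, h (a * b ω + n ω) * (b ω - tanh (a * (a * b ω + n ω))) ∂μ = 0 := by
  have hint (x : ℝ) (ν : Measure ℝ) [IsProbabilityMeasure ν] :
      Integrable (fun y => h y * (x - tanh (a * y))) ν :=
    (integrable_comp_tanh (g := (x - ·)) (by fun_prop) a).bdd_mul hh.aestronglyMeasurable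
      (ae_of_all _ hC)
  rw [integral_rademacher_add_gaussian hb hn hbLaw hnLaw hindep a
    (F := fun x y => h y * (x - tanh (a * y))) (by fun_prop) (hint _ _) (hint _ _),
    integral_mul_one_sub_tanh_gaussianReal]
  have hflip : ∫ y, h y * (-1 - tanh (a * y)) ∂gaussianReal (-a) 1
      = -∫ y, h y * (1 + tanh (a * y)) ∂gaussianReal (-a) 1 := by
    rw [← integral_neg]
    congr 1 with y
    ring
  rw [hflip]
  ring

theorem condExp_rademacher_add_gaussian (hb : Measurable b) (hn : Measurable n)
    (hbLaw : μ.map b = rademacher) (hnLaw : μ.map n = gaussianReal 0 1)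
    (hindep : IndepFun b n μ) (a : ℝ) :
    μ[b | MeasurableSpace.comap (fun ω => a * b ω + n ω) Real.measurableSpace]
      =ᵐ[μ] fun ω => tanh (a * (a * b ω + n ω)) := by
  set Y := fun ω => a * b ω + n ω
  have hY : Measurable Y := by fun_prop
  have hb_int : Integrable b μ :=
    (integrable_map_measure aestronglyMeasurable_id hb.aemeasurable).1
      (hbLaw ▸ integrable_id_rademacher)
  have htanh_int : Integrable (fun ω => tanh (a * Y ω)) μ :=
    (integrable_comp_tanh (g := id) continuous_id a).comp_measurable hY
  refine (ae_eq_condExp_of_forall_setIntegral_eq hY.comap_le hb_int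
    (fun _ _ _ => htanh_int.integrableOn) ?_ ?_).symm
  · rintro _ ⟨t, ht, rfl⟩ -
    have horth := integral_mul_sub_tanh_rademacher_add_gaussian hb hn hbLaw hnLaw hindep a
      (h := t.indicator 1) (measurable_const.indicator ht) (C := 1) (fun y => by
        by_cases hy : y ∈ t <;> simp [hy])
    rw [eq_comm, ← sub_eq_zero, ← integral_sub hb_int.integrableOn htanh_int.integrableOn,
      ← integral_indicator (hY ht), ← horth]
    congr 1 with ω
    by_cases hω : Y ω ∈ t <;> simp [hω, Y]
  · exact ((by fun_prop : Measurable fun y => tanh (a * y)).comp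
      (comap_measurable Y)).aestronglyMeasurable

end SignalPlusNoise

theorem mmse_rademacher_add_gaussian {Ω : Type*} [MeasureSpace Ω]
    [IsProbabilityMeasure (volume : Measure Ω)] {b n : Ω → ℝ} (hb : Measurable b)
    (hn : Measurable n) (hbLaw : Measure.map b volume = rademacher)
    (hnLaw : Measure.map n volume = gaussianReal 0 1) (hindep : IndepFun b n volume) (γ : ℝ) :
    mmse b n γ = ∫ y, 1 - tanh (√γ * y) ∂gaussianReal (√γ) 1 := by
  unfold mmse
  set a := √γ
  have hint (g : ℝ → ℝ) (hg : Continuous g) (m : ℝ) :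
      Integrable (fun y => g (tanh (a * y))) (gaussianReal m 1) :=
    integrable_comp_tanh hg a
  have hsq := integral_mul_one_sub_tanh_gaussianReal (fun y => 1 + tanh (a * y)) a
  calc _ = ∫ ω, (b ω - tanh (a * (a * b ω + n ω))) ^ 2 :=
        integral_congr_ae ((condExp_rademacher_add_gaussian hb hn hbLaw hnLaw hindep a).mono
          fun ω hω => by rw [hω])
    _ = 2⁻¹ * ∫ y, (-1 - tanh (a * y)) ^ 2 ∂gaussianReal (-a) 1
          + 2⁻¹ * ∫ y, (1 - tanh (a * y)) ^ 2 ∂gaussianReal a 1 :=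
        integral_rademacher_add_gaussian hb hn hbLaw hnLaw hindep a
          (F := fun x y => (x - tanh (a * y)) ^ 2) (by fun_prop)
          (hint (fun s => (-1 - s) ^ 2) (by fun_prop) _)
          (hint (fun s => (1 - s) ^ 2) (by fun_prop) _)
    _ = 2⁻¹ * ∫ y, (1 + tanh (a * y)) * (1 - tanh (a * y)) ∂gaussianReal a 1
          + 2⁻¹ * ∫ y, (1 - tanh (a * y)) ^ 2 ∂gaussianReal a 1 := by
        rw [hsq]
        congr 3 with y
        ring
    _ = ∫ y, 1 - tanh (a * y) ∂gaussianReal a 1 := by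
        rw [← mul_add, ← integral_add (hint (fun s => (1 + s) * (1 - s)) (by fun_prop) _)
          (hint (fun s => (1 - s) ^ 2) (by fun_prop) _), ← integral_const_mul]
        congr 1 with y
        ring

theorem mmse_binary_formula_and_bound_general {Ω : Type*} [MeasureSpace Ω]
    [IsProbabilityMeasure (volume : Measure Ω)]
    (b n : Ω → ℝ) (hb : Measurable b) (hn : Measurable n)
    (hbLaw : Measure.map b volume =
      (2 : ENNReal)⁻¹ • Measure.dirac (-1 : ℝ) + (2 : ENNReal)⁻¹ • Measure.dirac (1 : ℝ))
    (hnLaw : Measure.map n volume = gaussianReal 0 1)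
    (hindep : IndepFun b n volume) (γ : ℝ) :
    mmse b n γ =
      (1 / Real.sqrt (2 * π)) * ∫ y : ℝ,
        (1 - Real.tanh (Real.sqrt γ * y)) * Real.exp (-(y - Real.sqrt γ) ^ 2 / 2) ∧
    mmse b n γ ≥ 2 * gaussQ (Real.sqrt γ) := by
  rw [mmse_rademacher_add_gaussian hb hn hbLaw hnLaw hindep]
  refine ⟨?_, two_mul_gaussQ_le_integral_one_sub_tanh (sqrt_nonneg γ)⟩
  rw [integral_gaussianReal_eq_integral_smul one_ne_zero, ← integral_const_mul]
  congr 1 with y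
  simp only [gaussianPDFReal, NNReal.coe_one, mul_one, one_div, smul_eq_mul]
  ring

theorem mmse_binary_formula_and_bound {Ω : Type*} [MeasureSpace Ω]
    [IsProbabilityMeasure (volume : Measure Ω)]
    (b n : Ω → ℝ) (hb : Measurable b) (hn : Measurable n)
    (hbLaw : Measure.map b volume =
      (2 : ENNReal)⁻¹ • Measure.dirac (-1 : ℝ) + (2 : ENNReal)⁻¹ • Measure.dirac (1 : ℝ))
    (hnLaw : Measure.map n volume = gaussianReal 0 1)
    (hindep : IndepFun b n volume) (γ : ℝ) (hγ : 0 ≤ γ) :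
    mmse b n γ =
      (1 / Real.sqrt (2 * π)) * ∫ y : ℝ,
        (1 - Real.tanh (Real.sqrt γ * y)) * Real.exp (-(y - Real.sqrt γ) ^ 2 / 2) ∧
    mmse b n γ ≥ 2 * gaussQ (Real.sqrt γ) :=
  mmse_binary_formula_and_bound_general b n hb hn hbLaw hnLaw hindep γ
end

section
/- Suppose H(θ) is such that |H(θ)|² > 0 for all θ, and define g_ZF-DFE = exp{(1/2π)∫ log|H(θ)|² dθ}, g_ZF-LE = [(1/2π)∫ dθ/|H(θ)|²]^{−1}, and SNR_DFE(ρ) = exp{(1/2π)∫ log(1 + ρ|H(θ)|²) dθ}. Then SNR_DFE(ρ) ≤ ρ·g_ZF-DFE + g_ZF-DFE/g_ZF-LE for every ρ > 0. -/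
/-!
Normalize Lebesgue measure on `[-π, π]` to a probability measure, so that `(1 / 2π) ∫` becomes an
expectation. Factor `1 + ρ|H|² = ρ|H|² · (1 + 1 / (ρ|H|²))`: the geometric mean of the first factor
is `ρ · g_ZF-DFE`, and by Jensen's inequality for `exp` (the integral AM–GM inequality) the geometric
mean of the second is at most its arithmetic mean `1 + 1 / (ρ · g_ZF-LE)`.
-/

open MeasureTheory Real

section
variable {α : Type*} [MeasurableSpace α] {μ : Measure α} [IsProbabilityMeasure μ]

theorem exp_integral_log_le_integral {g : α → ℝ} (hg : ∀ᵐ x ∂μ, 0 < g x)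
    (hlog : Integrable (fun x => log (g x)) μ) (hgi : Integrable g μ) :
    exp (∫ x, log (g x) ∂μ) ≤ ∫ x, g x ∂μ := by
  have hexp : (fun x => exp (log (g x))) =ᵐ[μ] g := hg.mono fun x hx => exp_log hx
  calc exp (∫ x, log (g x) ∂μ) ≤ ∫ x, exp (log (g x)) ∂μ :=
        convexOn_exp.map_integral_le continuous_exp.continuousOn isClosed_univ
          (.of_forall fun _ => trivial) hlog ((integrable_congr hexp).mpr hgi)
    _ = ∫ x, g x ∂μ := integral_congr_ae hexp

theorem exp_integral_log_one_add_mul_le {F : α → ℝ} (hF : ∀ x, 0 < F x) {ρ : ℝ} (hρ : 0 < ρ)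
    (hlog : Integrable (fun x => log (F x)) μ)
    (hlog1 : Integrable (fun x => log (1 + ρ * F x)) μ)
    (hinv : Integrable (fun x => 1 / F x) μ) :
    exp (∫ x, log (1 + ρ * F x) ∂μ) ≤
      ρ * exp (∫ x, log (F x) ∂μ) + exp (∫ x, log (F x) ∂μ) * ∫ x, 1 / F x ∂μ := by
  set g : α → ℝ := fun x => 1 + ρ⁻¹ * (1 / F x)
  have hsplit : ∀ x, log (1 + ρ * F x) = log ρ + log (F x) + log (g x) := fun x => by
    have hFx := hF x
    rw [← log_mul hρ.ne' hFx.ne', ← log_mul (by positivity) (by positivity)]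
    congr 1
    simp only [g]
    field_simp
    ring
  have hlog_g : Integrable (fun x => log (g x)) μ :=
    ((hlog1.sub (integrable_const (log ρ))).sub hlog).congr
      (.of_forall fun x => by simp only [Pi.sub_apply, hsplit]; ring)
  have hg_int : ∫ x, g x ∂μ = 1 + ρ⁻¹ * ∫ x, 1 / F x ∂μ := by
    rw [integral_add (integrable_const 1) (hinv.const_mul _), integral_const_mul]
    simp
  have hjensen : exp (∫ x, log (g x) ∂μ) ≤ 1 + ρ⁻¹ * ∫ x, 1 / F x ∂μ :=
    hg_int ▸ exp_integral_log_le_integral (.of_forall fun x => by have := hF x; positivity)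
      hlog_g ((integrable_const 1).add (hinv.const_mul _))
  calc exp (∫ x, log (1 + ρ * F x) ∂μ)
      = ρ * exp (∫ x, log (F x) ∂μ) * exp (∫ x, log (g x) ∂μ) := by
        simp only [hsplit]
        rw [integral_add (f := fun x => log ρ + log (F x)) ((integrable_const _).add hlog) hlog_g,
          integral_add (integrable_const _) hlog, integral_const]
        simp [exp_add, exp_log hρ]
    _ ≤ ρ * exp (∫ x, log (F x) ∂μ) * (1 + ρ⁻¹ * ∫ x, 1 / F x ∂μ) := by gcongr
    _ = ρ * exp (∫ x, log (F x) ∂μ) + exp (∫ x, log (F x) ∂μ) * ∫ x, 1 / F x ∂μ := by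
        field_simp
end

namespace ProbabilityTheory

variable {Ω E : Type*} [MeasurableSpace Ω] {μ : Measure Ω} {s : Set Ω} [NormedAddCommGroup E]

theorem integral_cond [NormedSpace ℝ E] (f : Ω → E) (s : Set Ω) :
    ∫ x, f x ∂μ[|s] = (μ.real s)⁻¹ • ∫ x in s, f x ∂μ := by
  rw [cond, integral_smul_measure, measureReal_def, ENNReal.toReal_inv]

theorem _root_.MeasureTheory.IntegrableOn.integrable_cond {f : Ω → E} (hs : μ s ≠ 0)
    (hf : IntegrableOn f s μ) : Integrable f μ[|s] :=
  hf.smul_measure (ENNReal.inv_ne_top.2 hs)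

end ProbabilityTheory

open ProbabilityTheory

theorem snrDFE_upper_bound_general (H : ℝ → ℂ)
    (hpos : ∀ θ, 0 < ‖H θ‖ ^ 2)
    (hlogint : IntegrableOn (fun θ => Real.log (‖H θ‖ ^ 2)) (Set.Icc (-π) π))
    (hinvint : IntegrableOn (fun θ => 1 / ‖H θ‖ ^ 2) (Set.Icc (-π) π))
    (hint : ∀ ρ > (0 : ℝ), IntegrableOn
      (fun θ => Real.log (1 + ρ * ‖H θ‖ ^ 2)) (Set.Icc (-π) π)) :
    ∀ ρ > (0 : ℝ),
      Real.exp ((1 / (2 * π)) * ∫ θ in Set.Icc (-π) π,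
          Real.log (1 + ρ * ‖H θ‖ ^ 2)) ≤
        ρ * Real.exp ((1 / (2 * π)) * ∫ θ in Set.Icc (-π) π,
            Real.log (‖H θ‖ ^ 2)) +
          Real.exp ((1 / (2 * π)) * ∫ θ in Set.Icc (-π) π,
              Real.log (‖H θ‖ ^ 2)) /
            ((1 / (2 * π)) * ∫ θ in Set.Icc (-π) π, 1 / ‖H θ‖ ^ 2)⁻¹ := by
  intro ρ hρ
  have hπ : -π ≤ π := by linarith [pi_pos]
  have hvol : volume (Set.Icc (-π) π) ≠ 0 := by simp [pi_pos]
  have : IsProbabilityMeasure volume[|Set.Icc (-π) π] :=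
    cond_isProbabilityMeasure_of_finite hvol (by simp)
  have key := exp_integral_log_one_add_mul_le hpos hρ (hlogint.integrable_cond hvol)
    ((hint ρ hρ).integrable_cond hvol) (hinvint.integrable_cond hvol)
  simp only [integral_cond, Real.volume_real_Icc_of_le hπ, smul_eq_mul, sub_neg_eq_add,
    ← two_mul] at key
  rwa [div_inv_eq_mul, one_div]

theorem snrDFE_upper_bound (H : ℝ → ℂ)
    (hH : Measurable H)
    (hpos : ∀ θ, 0 < ‖H θ‖ ^ 2)
    (hlogint : IntegrableOn (fun θ => Real.log (‖H θ‖ ^ 2)) (Set.Icc (-π) π))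
    (hinvint : IntegrableOn (fun θ => 1 / ‖H θ‖ ^ 2) (Set.Icc (-π) π))
    (hint : ∀ ρ > (0 : ℝ), IntegrableOn
      (fun θ => Real.log (1 + ρ * ‖H θ‖ ^ 2)) (Set.Icc (-π) π)) :
    ∀ ρ > (0 : ℝ),
      Real.exp ((1 / (2 * π)) * ∫ θ in Set.Icc (-π) π,
          Real.log (1 + ρ * ‖H θ‖ ^ 2)) ≤
        ρ * Real.exp ((1 / (2 * π)) * ∫ θ in Set.Icc (-π) π,
            Real.log (‖H θ‖ ^ 2)) +
          Real.exp ((1 / (2 * π)) * ∫ θ in Set.Icc (-π) π,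
              Real.log (‖H θ‖ ^ 2)) /
            ((1 / (2 * π)) * ∫ θ in Set.Icc (-π) π, 1 / ‖H θ‖ ^ 2)⁻¹ :=
  snrDFE_upper_bound_general H hpos hlogint hinvint hint
end
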